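/- Soundness of dFrege+IndExt+Red lines: if the DQBF ∀U ∃E φ is true and lines L₁,…,Lₙ are derived by the rules (Axiom, Frege rules, IndExt, 0-red, 1-red, prefix weakening), then the DQBF ∀U' ∃E' (φ ∧ L₁ ∧ … ∧ Lₙ) is true, where U', E' extend the prefix with the new variables introduced. In particular, if the constant 0 is derivable, then ∀U ∃E φ is false. -/
import Mathlib


inductive Fml where
  | tru | fls
  | var (v : ℕ)
  | neg (φ : Fml)
  | conj (φ ψ : Fml)
  | disj (φ ψ : Fml)

def Fml.eval (α : ℕ → Bool) : Fml → Bool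
  | .tru => true
  | .fls => false
  | .var v => α v
  | .neg φ => !(φ.eval α)
  | .conj φ ψ => φ.eval α && ψ.eval α
  | .disj φ ψ => φ.eval α || ψ.eval α

def Fml.vars : Fml → Finset ℕ
  | .tru => ∅
  | .fls => ∅
  | .var v => {v}
  | .neg φ => φ.vars
  | .conj φ ψ => φ.vars ∪ ψ.vars
  | .disj φ ψ => φ.vars ∪ ψ.vars

def Fml.substC (u : ℕ) (c : Bool) : Fml → Fml
  | .tru => .tru
  | .fls => .fls
  | .var v => if v = u then (if c then .tru else .fls) else .var v
  | .neg φ => .neg (φ.substC u c)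
  | .conj φ ψ => .conj (φ.substC u c) (ψ.substC u c)
  | .disj φ ψ => .disj (φ.substC u c) (ψ.substC u c)

abbrev Lit := ℕ × Bool

def litFml (l : Lit) : Fml := if l.2 then .var l.1 else .neg (.var l.1)

noncomputable def bigConj (s : Finset Lit) : Fml := s.toList.foldr (fun l f => .conj (litFml l) f) .tru
noncomputable def bigDisj (s : Finset Lit) : Fml := s.toList.foldr (fun l f => .disj (litFml l) f) .fls

/-- The formula α → (v ↔ body). -/
noncomputable def mkExt (a : Finset Lit) (v : ℕ) (body : Fml) : Fml :=
  .disj (.neg (bigConj a))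
    (.disj (.conj (.var v) body) (.conj (.neg (.var v)) (.neg body)))

def totalAsgn (E : Finset ℕ) (σ : ℕ → (ℕ → Bool) → Bool) (τ : ℕ → Bool) : ℕ → Bool :=
  fun w => if w ∈ E then σ w τ else τ w

def skolemDeps (E : Finset ℕ) (dep : ℕ → Finset ℕ) (σ : ℕ → (ℕ → Bool) → Bool) : Prop :=
  ∀ x ∈ E, ∀ τ τ' : ℕ → Bool, (∀ w ∈ dep x, τ w = τ' w) → σ x τ = σ x τ'

def depOf (E : Finset ℕ) (dep : ℕ → Finset ℕ) (y : ℕ) : Finset ℕ :=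
  if y ∈ E then dep y else {y}

/-- Truth of the S-form DQBF whose matrix is the conjunction of `Φ`:
existential variables `E` with dependency sets `dep`, the rest universal. -/
def dqTrue (E : Finset ℕ) (dep : ℕ → Finset ℕ) (Φ : List Fml) : Prop :=
  ∃ σ : ℕ → (ℕ → Bool) → Bool, skolemDeps E dep σ ∧
    ∀ τ : ℕ → Bool, ∀ L ∈ Φ, L.eval (totalAsgn E σ τ) = true

def listVars (L : List Fml) : Finset ℕ := L.foldr (fun f acc => f.vars ∪ acc) ∅

/-- A proof state: current existential variables, dependency sets, derived lines. -/
structure St where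
  E : Finset ℕ
  dep : ℕ → Finset ℕ
  lines : List Fml

def stVars (φ : List Fml) (s : St) : Finset ℕ := listVars φ ∪ listVars s.lines

/-- The rules of dFrege + IndExt + Red over the matrix conjuncts φ. -/
inductive Step (φ : List Fml) : St → St → Prop
  | ax {s : St} {L : Fml} : L ∈ φ → Step φ s ⟨s.E, s.dep, s.lines ++ [L]⟩
  | frege {s : St} {L : Fml} :
      (∀ α : ℕ → Bool, (∀ M ∈ s.lines, M.eval α = true) → L.eval α = true) →
      Step φ s ⟨s.E, s.dep, s.lines ++ [L]⟩
  | indext {s : St} (v : ℕ) (a Y : Finset Lit) (isConj : Bool) :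
      (∀ l ∈ a, l.1 ∉ s.E) →
      v ∉ s.E → v ∉ stVars φ s → (∀ l ∈ a, l.1 ≠ v) → (∀ l ∈ Y, l.1 ≠ v) →
      Step φ s ⟨insert v s.E,
        Function.update s.dep v
          ((Y.biUnion (fun y => depOf s.E s.dep y.1)) \ a.image Prod.fst),
        s.lines ++ [mkExt a v (if isConj then bigConj Y else bigDisj Y)]⟩
  | red {s : St} (L : Fml) (u : ℕ) (c : Bool) :
      L ∈ s.lines → u ∉ s.E →
      (∀ x ∈ L.vars, x ∈ s.E → u ∉ s.dep x) →
      Step φ s ⟨s.E, s.dep, s.lines ++ [L.substC u c]⟩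
  | prefixWeak {s : St} (v : ℕ) (D : Finset ℕ) :
      v ∉ s.E → v ∉ stVars φ s →
      Step φ s ⟨insert v s.E, Function.update s.dep v D, s.lines⟩

lemma Fml.eval_congr (φ : Fml) : ∀ {α β : ℕ → Bool}, (∀ v ∈ φ.vars, α v = β v) → φ.eval α = φ.eval β := by
  induction φ with
  | tru => intros; rfl
  | fls => intros; rfl
  | var v => intro α β h; exact h v (by simp [Fml.vars])
  | neg φ ih => intro α β h; simp [Fml.eval, ih (by simpa [Fml.vars] using h)]
  | conj φ ψ ih1 ih2 =>
      intro α β h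
      simp only [Fml.vars, Finset.mem_union] at h
      simp [Fml.eval, ih1 (fun v hv => h v (Or.inl hv)), ih2 (fun v hv => h v (Or.inr hv))]
  | disj φ ψ ih1 ih2 =>
      intro α β h
      simp only [Fml.vars, Finset.mem_union] at h
      simp [Fml.eval, ih1 (fun v hv => h v (Or.inl hv)), ih2 (fun v hv => h v (Or.inr hv))]

lemma Fml.substC_eval (u : ℕ) (c : Bool) (α : ℕ → Bool) (φ : Fml) :
    (φ.substC u c).eval α = φ.eval (Function.update α u c) := by
  induction φ with
  | tru => rfl
  | fls => rfl
  | var v =>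
      by_cases h : v = u
      · subst h; cases c <;> simp [Fml.substC, Fml.eval, Function.update_apply]
      · simp [Fml.substC, Fml.eval, Function.update_apply, h]
  | neg φ ih => simp [Fml.substC, Fml.eval, ih]
  | conj φ ψ ih1 ih2 => simp [Fml.substC, Fml.eval, ih1, ih2]
  | disj φ ψ ih1 ih2 => simp [Fml.substC, Fml.eval, ih1, ih2]

lemma litFml_vars (l : Lit) : (litFml l).vars = {l.1} := by
  cases h : l.2 <;> simp [litFml, h, Fml.vars]

lemma litFml_eval_iff {l : Lit} {α : ℕ → Bool} : (litFml l).eval α = true ↔ α l.1 = l.2 := by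
  cases h : l.2 <;> simp [litFml, h, Fml.eval]

lemma foldrConj_vars (L : List Lit) :
    (L.foldr (fun l f => Fml.conj (litFml l) f) Fml.tru).vars ⊆ (L.map Prod.fst).toFinset := by
  induction L with
  | nil => simp [Fml.vars]
  | cons p L ih =>
      intro x hx
      simp only [List.foldr, Fml.vars, Finset.mem_union, litFml_vars, Finset.mem_singleton] at hx
      rcases hx with rfl | hx
      · simp
      · simp only [List.map, List.toFinset_cons, Finset.mem_insert]
        exact Or.inr (ih hx)

lemma foldrDisj_vars (L : List Lit) :
    (L.foldr (fun l f => Fml.disj (litFml l) f) Fml.fls).vars ⊆ (L.map Prod.fst).toFinset := by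
  induction L with
  | nil => simp [Fml.vars]
  | cons p L ih =>
      intro x hx
      simp only [List.foldr, Fml.vars, Finset.mem_union, litFml_vars, Finset.mem_singleton] at hx
      rcases hx with rfl | hx
      · simp
      · simp only [List.map, List.toFinset_cons, Finset.mem_insert]
        exact Or.inr (ih hx)

lemma bigConj_vars {s : Finset Lit} : (bigConj s).vars ⊆ s.image Prod.fst := by
  intro x hx
  have := foldrConj_vars s.toList hx
  simp only [List.mem_toFinset, List.mem_map, Finset.mem_toList] at this
  obtain ⟨p, hp, rfl⟩ := this
  exact Finset.mem_image_of_mem _ hp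

lemma bigDisj_vars {s : Finset Lit} : (bigDisj s).vars ⊆ s.image Prod.fst := by
  intro x hx
  have := foldrDisj_vars s.toList hx
  simp only [List.mem_toFinset, List.mem_map, Finset.mem_toList] at this
  obtain ⟨p, hp, rfl⟩ := this
  exact Finset.mem_image_of_mem _ hp

lemma foldrConj_eval (L : List Lit) (α : ℕ → Bool) :
    (L.foldr (fun l f => Fml.conj (litFml l) f) Fml.tru).eval α = true ↔
      ∀ p ∈ L, (litFml p).eval α = true := by
  induction L with
  | nil => simp [Fml.eval]
  | cons p L ih => simp [Fml.eval, ih]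

lemma bigConj_eval {s : Finset Lit} {α : ℕ → Bool} :
    (bigConj s).eval α = true ↔ ∀ p ∈ s, α p.1 = p.2 := by
  simp [bigConj, foldrConj_eval, litFml_eval_iff, Finset.mem_toList]

lemma mem_listVars {M : Fml} {L : List Fml} (h : M ∈ L) : M.vars ⊆ listVars L := by
  induction L with
  | nil => simp at h
  | cons N L ih =>
      rcases List.mem_cons.mp h with rfl | h
      · exact fun x hx => Finset.mem_union_left _ hx
      · exact fun x hx => Finset.mem_union_right _ (ih h hx)

/-- Force the assignment of the variables mentioned in `a` to satisfy `a`. -/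
noncomputable def forceA (a : Finset Lit) (τ : ℕ → Bool) : ℕ → Bool :=
  fun u => if (u, true) ∈ a then true else if (u, false) ∈ a then false else τ u

lemma forceA_eq_of_not_mem {a : Finset Lit} {τ : ℕ → Bool} {u : ℕ}
    (h : u ∉ a.image Prod.fst) : forceA a τ u = τ u := by
  have h1 : (u, true) ∉ a := fun hc => h (Finset.mem_image_of_mem _ hc)
  have h2 : (u, false) ∉ a := fun hc => h (Finset.mem_image_of_mem _ hc)
  simp [forceA, h1, h2]

lemma forceA_congr {a : Finset Lit} {τ τ' : ℕ → Bool} {u : ℕ}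
    (h : u ∉ a.image Prod.fst → τ u = τ' u) : forceA a τ u = forceA a τ' u := by
  by_cases h1 : (u, true) ∈ a
  · simp [forceA, h1]
  · by_cases h2 : (u, false) ∈ a
    · simp [forceA, h1, h2]
    · have : u ∉ a.image Prod.fst := by
        intro hc
        obtain ⟨⟨q, b⟩, hp, rfl⟩ := Finset.mem_image.mp hc
        cases b
        · exact h2 hp
        · exact h1 hp
      simp [forceA, h1, h2, h this]

lemma forceA_of_sat {a : Finset Lit} {τ : ℕ → Bool}
    (h : ∀ p ∈ a, τ p.1 = p.2) : forceA a τ = τ := by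
  funext u
  by_cases h1 : (u, true) ∈ a
  · have := h _ h1; simp [forceA, h1, this]
  · by_cases h2 : (u, false) ∈ a
    · have := h _ h2; simp [forceA, h1, h2, this]
    · simp [forceA, h1, h2]

lemma step_sound {φ : List Fml} {s t : St} (hstep : Step φ s t)
    (h : dqTrue s.E s.dep (φ ++ s.lines)) : dqTrue t.E t.dep (φ ++ t.lines) := by
  obtain ⟨σ, hdep, hall⟩ := h
  cases hstep with
  | @ax L hL =>
      refine ⟨σ, hdep, fun τ M hM => ?_⟩
      simp only [List.mem_append, List.mem_singleton] at hM
      rcases hM with hM | hM | rfl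
      · exact hall τ M (List.mem_append.mpr (Or.inl hM))
      · exact hall τ M (List.mem_append.mpr (Or.inr hM))
      · exact hall τ M (List.mem_append.mpr (Or.inl hL))
  | @frege L hL =>
      refine ⟨σ, hdep, fun τ M hM => ?_⟩
      simp only [List.mem_append, List.mem_singleton] at hM
      rcases hM with hM | hM | rfl
      · exact hall τ M (List.mem_append.mpr (Or.inl hM))
      · exact hall τ M (List.mem_append.mpr (Or.inr hM))
      · exact hL _ (fun N hN => hall τ N (List.mem_append.mpr (Or.inr hN)))
  | red L u c hLmem huE hdeps =>
      refine ⟨σ, hdep, fun τ M hM => ?_⟩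
      simp only [List.mem_append, List.mem_singleton] at hM
      rcases hM with hM | hM | rfl
      · exact hall τ M (List.mem_append.mpr (Or.inl hM))
      · exact hall τ M (List.mem_append.mpr (Or.inr hM))
      · rw [Fml.substC_eval]
        set τ' : ℕ → Bool := Function.update τ u c with hτ'
        have key : ∀ x ∈ L.vars, Function.update (totalAsgn s.E σ τ) u c x
            = totalAsgn s.E σ τ' x := by
          intro x hx
          by_cases hxu : x = u
          · subst hxu
            simp [totalAsgn, Function.update_apply, huE, hτ']
          · rw [Function.update_apply, if_neg hxu]
            by_cases hxE : x ∈ s.E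
            · simp only [totalAsgn, if_pos hxE]
              exact hdep x hxE τ τ' (fun w hw => by
                rw [hτ', Function.update_apply,
                  if_neg (fun (hwu : w = u) => (hdeps x hx hxE) (hwu ▸ hw))])
            · simp [totalAsgn, hxE, hτ', Function.update_apply, hxu]
        rw [Fml.eval_congr L key]
        exact hall τ' L (List.mem_append.mpr (Or.inr hLmem))
  | prefixWeak v D hvE hvV =>
      set σ' : ℕ → (ℕ → Bool) → Bool := Function.update σ v (fun _ => true) with hσ'
      refine ⟨σ', ?_, ?_⟩
      · intro x hx τ τ' hag
        rcases Finset.mem_insert.mp hx with rfl | hx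
        · simp [hσ']
        · have hxv : x ≠ v := fun hc => hvE (hc ▸ hx)
          simp only [hσ', Function.update_apply, if_neg hxv]
          exact hdep x hx τ τ' (by simpa [Function.update_apply, hxv] using hag)
      · intro τ M hM
        have hMv : v ∉ M.vars := by
          intro hc
          apply hvV
          rcases List.mem_append.mp hM with hM | hM
          · exact Finset.mem_union_left _ (mem_listVars hM hc)
          · exact Finset.mem_union_right _ (mem_listVars hM hc)
        rw [Fml.eval_congr M (β := totalAsgn s.E σ τ) (fun w hw => by
          have hwv : w ≠ v := fun hc => hMv (hc ▸ hw)
          simp [totalAsgn, Finset.mem_insert, hwv, hσ', Function.update_apply])]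
        exact hall τ M hM
  | indext v a Y isConj hA hvE hvV hav hYv =>
      set body : Fml := if isConj then bigConj Y else bigDisj Y with hbody
      have hbvars : body.vars ⊆ Y.image Prod.fst := by
        rw [hbody]; cases isConj <;> simp [bigConj_vars, bigDisj_vars]
      have hvbody : v ∉ body.vars := fun hc => by
        obtain ⟨p, hp, hp1⟩ := Finset.mem_image.mp (hbvars hc)
        exact hYv p hp hp1
      set D : Finset ℕ := (Y.biUnion (fun y => depOf s.E s.dep y.1)) \ a.image Prod.fst with hD
      set f : (ℕ → Bool) → Bool := fun τ => body.eval (totalAsgn s.E σ (forceA a τ)) with hf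
      set σ' : ℕ → (ℕ → Bool) → Bool := Function.update σ v f with hσ'
      have hσ'v : ∀ x ∈ s.E, σ' x = σ x := fun x hx => by
        have hxv : x ≠ v := fun hc => hvE (hc ▸ hx)
        simp [hσ', Function.update_apply, hxv]
      have hfdep : ∀ τ τ' : ℕ → Bool, (∀ w ∈ D, τ w = τ' w) → f τ = f τ' := by
        intro τ τ' hag
        apply Fml.eval_congr
        intro w hw
        obtain ⟨p, hp, rfl⟩ := Finset.mem_image.mp (hbvars hw)
        by_cases hwE : p.1 ∈ s.E
        · simp only [totalAsgn, if_pos hwE]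
          apply hdep p.1 hwE
          intro z hz
          apply forceA_congr
          intro hza
          apply hag
          rw [hD]
          refine Finset.mem_sdiff.mpr ⟨Finset.mem_biUnion.mpr ⟨p, hp, ?_⟩, hza⟩
          simpa [depOf, hwE] using hz
        · simp only [totalAsgn, if_neg hwE]
          apply forceA_congr
          intro hpa
          apply hag
          rw [hD]
          refine Finset.mem_sdiff.mpr ⟨Finset.mem_biUnion.mpr ⟨p, hp, ?_⟩, hpa⟩
          simp [depOf, hwE]
      refine ⟨σ', ?_, ?_⟩
      · intro x hx τ τ' hag
        rcases Finset.mem_insert.mp hx with rfl | hx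
        · simp only [hσ', Function.update_self]
          exact hfdep τ τ' (by simpa [Function.update_self] using hag)
        · have hxv : x ≠ v := fun hc => hvE (hc ▸ hx)
          simp only [hσ', Function.update_apply, if_neg hxv]
          exact hdep x hx τ τ' (by simpa [Function.update_apply, hxv] using hag)
      · intro τ M hM
        have hβ : ∀ w ≠ v, totalAsgn (insert v s.E) σ' τ w = totalAsgn s.E σ τ w := by
          intro w hwv
          simp only [totalAsgn, Finset.mem_insert]
          by_cases hwE : w ∈ s.E
          · simp [hwE, hσ', Function.update_apply, hwv]
          · simp [hwE, hwv]
        simp only [List.mem_append, List.mem_singleton] at hM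
        rcases hM with hM | hM | rfl
        · have hMv : v ∉ M.vars := fun hc =>
            hvV (Finset.mem_union_left _ (mem_listVars hM hc))
          rw [Fml.eval_congr M (fun w hw => hβ w (fun hc => hMv (hc ▸ hw)))]
          exact hall τ M (List.mem_append.mpr (Or.inl hM))
        · have hMv : v ∉ M.vars := fun hc =>
            hvV (Finset.mem_union_right _ (mem_listVars hM hc))
          rw [Fml.eval_congr M (fun w hw => hβ w (fun hc => hMv (hc ▸ hw)))]
          exact hall τ M (List.mem_append.mpr (Or.inr hM))
        · set β' := totalAsgn (insert v s.E) σ' τ with hβ'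
          have heval : (mkExt a v body).eval β'
              = (!(bigConj a).eval β' || (β' v && body.eval β' || (!β' v && !body.eval β'))) := by
            simp [mkExt, Fml.eval]
          rw [heval]
          by_cases hg : (bigConj a).eval β' = true
          · have hsat : ∀ p ∈ a, τ p.1 = p.2 := by
              intro p hp
              have := bigConj_eval.mp hg p hp
              rw [hβ p.1 (hav p hp)] at this
              simpa [totalAsgn, hA p hp] using this
            have hbb : body.eval β' = body.eval (totalAsgn s.E σ τ) :=
              Fml.eval_congr body (fun w hw => hβ w (fun hc => hvbody (hc ▸ hw)))
            have hv' : β' v = body.eval β' := by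
              have h1 : β' v = f τ := by
                show totalAsgn (insert v s.E) σ' τ v = f τ
                simp [totalAsgn, hσ', Function.update_self]
              have h2 : f τ = body.eval β' := by
                show body.eval (totalAsgn s.E σ (forceA a τ)) = body.eval β'
                rw [forceA_of_sat hsat]
                exact hbb.symm
              rw [h1, h2]
            rw [hv']
            cases body.eval β' <;> simp
          · simp [hg]

/-- Soundness of dFrege + IndExt + Red: derivations from a true DQBF keep the
extended DQBF (matrix conjoined with all derived lines) true; in particular, if
the constant 0 is derivable then the original DQBF is false. -/
theorem dFregeRed_sound (φ : List Fml) (E0 : Finset ℕ) (dep0 : ℕ → Finset ℕ)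
    (s : St) (h : Relation.ReflTransGen (Step φ) ⟨E0, dep0, []⟩ s) :
    (dqTrue E0 dep0 φ → dqTrue s.E s.dep (φ ++ s.lines)) ∧
    (Fml.fls ∈ s.lines → ¬ dqTrue E0 dep0 φ) := by
  have main : dqTrue E0 dep0 φ → dqTrue s.E s.dep (φ ++ s.lines) := by
    intro h0
    induction h with
    | refl => simpa using h0
    | tail _ hstep ih => exact step_sound hstep ih
  refine ⟨main, fun hfls htrue => ?_⟩
  obtain ⟨σ, _, hall⟩ := main htrue
  have := hall (fun _ => true) Fml.fls (by simp [hfls])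
  simp [Fml.eval] at this
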